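/- arXiv:2108.11432 — 4 statements merged into one kernel-verified Lean document; each statement's English description precedes it below -/
import Mathlib

section
/- The bilinear form xi121 is a Hochschild 2-cocycle on B, i.e. eps(a)*xi121(b,c) + xi121(a,b*c) = xi121(a*b,c) + xi121(a,b)*eps(c) for all a, b, c in B. -/
/-!
Common framework: convolution algebras, Hopf 2-cocycles, the Nichols algebra `B` of Cartan
type `A₂` with `q = -1`, its bosonization `A = B # H`, bilinear forms on `B` and their
extensions to `A ⊗ A`, following García–Sánchez, "Hopf cocycles associated to pointed and
copointed deformations over S₃" (arXiv:2108.11432).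
-/

open scoped TensorProduct
open TensorProduct

noncomputable section

namespace PaperA2

section Defs

variable (k : Type*) [Field k]

section Conv

variable {C : Type*} [AddCommMonoid C] [Module k C] [CoalgebraStruct k C]

/-- Convolution product on linear functionals on a coalgebra:
`(f * g)(c) = ∑ f(c₁) g(c₂)`. -/
def conv (f g : C →ₗ[k] k) : C →ₗ[k] k :=
  LinearMap.mul' k k ∘ₗ TensorProduct.map f g ∘ₗ CoalgebraStruct.comul

/-- The unit of the convolution algebra: the counit. -/
def convOne : C →ₗ[k] k := CoalgebraStruct.counit

/-- Convolution invertibility. -/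
def IsConvUnit (f : C →ₗ[k] k) : Prop :=
  ∃ g, conv k f g = convOne k ∧ conv k g f = convOne k

/-- Convolution powers `f^{*n}`. -/
def convPow (f : C →ₗ[k] k) : ℕ → (C →ₗ[k] k)
  | 0 => convOne k
  | n + 1 => conv k f (convPow f n)

/-- The convolution exponential `∑_{n=0}^{4} (1/n!) f^{*n}` (all higher convolution powers
vanish for the functionals considered here). -/
def expConv (f : C →ₗ[k] k) : C →ₗ[k] k :=
  ∑ n ∈ Finset.range 5, ((n.factorial : k)⁻¹ • convPow k f n)

end Conv

section Bialg

variable {A : Type*} [Ring A] [Bialgebra k A]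

/-- The left-hand side `(σ ⊗ ε) * σ(m ⊗ id)` of the Hopf 2-cocycle condition, as a
functional on `(A ⊗ A) ⊗ A`: on pure tensors it is `x ⊗ y ⊗ z ↦ ∑ σ(x₁ ⊗ y₁) σ(x₂y₂ ⊗ z)`. -/
def hopfLHS (σ : A ⊗[k] A →ₗ[k] k) : (A ⊗[k] A) ⊗[k] A →ₗ[k] k :=
  conv k (LinearMap.mul' k k ∘ₗ TensorProduct.map σ CoalgebraStruct.counit)
    (σ ∘ₗ TensorProduct.map (LinearMap.mul' k A) LinearMap.id)

/-- The right-hand side `(ε ⊗ σ) * σ(id ⊗ m)`: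
on pure tensors it is `x ⊗ y ⊗ z ↦ ∑ σ(y₁ ⊗ z₁) σ(x ⊗ y₂z₂)`. -/
def hopfRHS (σ : A ⊗[k] A →ₗ[k] k) : (A ⊗[k] A) ⊗[k] A →ₗ[k] k :=
  conv k
    (LinearMap.mul' k k ∘ₗ TensorProduct.map CoalgebraStruct.counit σ ∘ₗ
      (TensorProduct.assoc k A A A).toLinearMap)
    (σ ∘ₗ TensorProduct.map LinearMap.id (LinearMap.mul' k A) ∘ₗ
      (TensorProduct.assoc k A A A).toLinearMap)

/-- A Hopf 2-cocycle: a convolution invertible `σ : A ⊗ A →ₗ k` satisfying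
`∑ σ(x₁ ⊗ y₁) σ(x₂y₂ ⊗ z) = ∑ σ(y₁ ⊗ z₁) σ(x ⊗ y₂z₂)` for all `x, y, z ∈ A`. -/
def IsHopf2Cocycle (σ : A ⊗[k] A →ₗ[k] k) : Prop :=
  IsConvUnit k σ ∧ hopfLHS k σ = hopfRHS k σ

/-- The action `α ⇀ σ`: `x ⊗ y ↦ ∑ α(x₁) α(y₁) σ(x₂ ⊗ y₂) α⁻¹(x₃ y₃)`. -/
def act (α αinv : A →ₗ[k] k) (σ : A ⊗[k] A →ₗ[k] k) : A ⊗[k] A →ₗ[k] k :=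
  conv k (conv k (LinearMap.mul' k k ∘ₗ TensorProduct.map α α) σ)
    (αinv ∘ₗ LinearMap.mul' k A)

/-- `σ'` is cohomologous to `σ`: `σ' = α ⇀ σ` for some convolution invertible `α : A → k`. -/
def IsCohomologous (σ σ' : A ⊗[k] A →ₗ[k] k) : Prop :=
  ∃ α αinv : A →ₗ[k] k,
    conv k α αinv = convOne k ∧ conv k αinv α = convOne k ∧ act k α αinv σ = σ'

/-- First commutation condition `[η(id ⊗ m), ε ⊗ η]_* = 0`; on pure tensors it reads
`∑ η(x ⊗ y₁z₁) η(y₂ ⊗ z₂) = ∑ η(y₁ ⊗ z₁) η(x ⊗ y₂z₂)` for all `x, y, z ∈ A`. -/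
def Comm1 (η : A ⊗[k] A →ₗ[k] k) : Prop :=
  conv k (η ∘ₗ TensorProduct.map (LinearMap.id (M := A)) (LinearMap.mul' k A))
      (LinearMap.mul' k k ∘ₗ TensorProduct.map CoalgebraStruct.counit η)
    = conv k (LinearMap.mul' k k ∘ₗ TensorProduct.map CoalgebraStruct.counit η)
      (η ∘ₗ TensorProduct.map (LinearMap.id (M := A)) (LinearMap.mul' k A))

/-- Second commutation condition `[η(m ⊗ id), η ⊗ ε]_* = 0`; on pure tensors it reads
`∑ η(x₁y₁ ⊗ z) η(x₂ ⊗ y₂) = ∑ η(x₁ ⊗ y₁) η(x₂y₂ ⊗ z)` for all `x, y, z ∈ A`. -/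
def Comm2 (η : A ⊗[k] A →ₗ[k] k) : Prop :=
  conv k (η ∘ₗ TensorProduct.map (LinearMap.mul' k A) (LinearMap.id (M := A)))
      (LinearMap.mul' k k ∘ₗ TensorProduct.map η CoalgebraStruct.counit)
    = conv k (LinearMap.mul' k k ∘ₗ TensorProduct.map η CoalgebraStruct.counit)
      (η ∘ₗ TensorProduct.map (LinearMap.mul' k A) (LinearMap.id (M := A)))

end Bialg

section Bside

variable {B : Type*} [Ring B] [Algebra k B]

/-- `x12 := x1 x2 - q12 x2 x1`. -/
def x12 (q12 : k) (X1 X2 : B) : B := X1 * X2 - q12 • (X2 * X1)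

/-- The PBW basis `(1, x1, x2, x12, x12 x1, x2 x1, x2 x12, x2 x12 x1)` of `B`. -/
def bbVec (q12 : k) (X1 X2 : B) : Fin 8 → B :=
  ![1, X1, X2, x12 k q12 X1 X2, x12 k q12 X1 X2 * X1, X2 * X1,
    X2 * x12 k q12 X1 X2, X2 * x12 k q12 X1 X2 * X1]

/-- The bilinear form on `B` determined by a matrix of values on the basis `bB`. -/
def ofMat (bB : Module.Basis (Fin 8) k B) (M : Fin 8 → Fin 8 → k) : B →ₗ[k] B →ₗ[k] k :=
  bB.constr k fun i => bB.constr k fun j => M i j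

/-- Hochschild 2-cocycle with trivial coefficients:
`ε(a) η(b,c) + η(a,bc) = η(ab,c) + η(a,b) ε(c)`. -/
def IsHochschild2Cocycle (ε : B →ₐ[k] k) (η : B →ₗ[k] B →ₗ[k] k) : Prop :=
  ∀ a b c : B, ε a * η b c + η a (b * c) = η (a * b) c + η a b * ε c

/-- Hochschild 2-coboundary with trivial coefficients:
`η(a,b) = ε(a) f(b) - f(ab) + f(a) ε(b)` for some linear `f : B → k`. -/
def IsHochschild2Coboundary (ε : B →ₐ[k] k) (η : B →ₗ[k] B →ₗ[k] k) : Prop :=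
  ∃ f : B →ₗ[k] k, ∀ a b : B, η a b = ε a * f b - f (a * b) + f a * ε b

/-- `Γ`-invariance of a bilinear form on `B` with respect to the automorphisms `φ1, φ2`
given by conjugation by `g1, g2`. -/
def IsGammaInvariant (φ1 φ2 : B →ₐ[k] B) (η : B →ₗ[k] B →ₗ[k] k) : Prop :=
  (∀ a b : B, η (φ1 a) (φ1 b) = η a b) ∧ (∀ a b : B, η (φ2 a) (φ2 b) = η a b)

/-- The defining properties of the conjugation automorphisms `φᵢ(xⱼ) = qᵢⱼ xⱼ`. -/
def PhiSetup (q12 : k) (X1 X2 : B) (φ1 φ2 : B →ₐ[k] B) : Prop :=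
  Function.Bijective φ1 ∧ Function.Bijective φ2 ∧
    φ1 X1 = (-1 : k) • X1 ∧ φ1 X2 = q12 • X2 ∧
    φ2 X1 = (-q12) • X1 ∧ φ2 X2 = (-1 : k) • X2

/-- Matrix of values of `ξ0` on the basis. -/
def mXi0 : Fin 8 → Fin 8 → k := fun i j => if i = 0 ∧ j = 0 then 1 else 0

/-- Matrix of values of `ξ1 = ξ₁¹` on the basis. -/
def mXi1 : Fin 8 → Fin 8 → k := fun i j => if i = 1 ∧ j = 1 then 1 else 0

/-- Matrix of values of `ξ2 = ξ₂²` on the basis. -/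
def mXi2 : Fin 8 → Fin 8 → k := fun i j => if i = 2 ∧ j = 2 then 1 else 0

/-- Matrix of values of `ξ121 = ξ²₁₂₁` on the basis
(order: 1, x1, x2, x12, x12x1, x2x1, x2x12, x2x12x1). -/
def mXi121 (q12 : k) : Fin 8 → Fin 8 → k := fun i j =>
  if i = 2 ∧ j = 4 then 1
  else if i = 6 ∧ j = 1 then 1
  else if i = 5 ∧ j = 5 then 1
  else if i = 3 ∧ j = 3 then 1
  else if i = 3 ∧ j = 5 then -q12
  else if i = 5 ∧ j = 3 then -q12
  else 0

/-- Matrix of values of `ξ212 = ξ¹₂₁₂` on the basis. -/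
def mXi212 : Fin 8 → Fin 8 → k := fun i j =>
  if i = 1 ∧ j = 6 then 1
  else if i = 3 ∧ j = 3 then 1
  else if i = 4 ∧ j = 2 then 1
  else 0

/-- Matrix of values of the bilinear form `T_λ` of the Hopf 2-cocycle `σ_λ` on the basis
(here `q21 = -q12`). -/
def mT (q12 l1 l2 l12 : k) : Fin 8 → Fin 8 → k := fun i j =>
  if i = 0 ∧ j = 0 then 1
  else if i = 1 ∧ j = 1 then l1
  else if i = 2 ∧ j = 2 then l2
  else if i = 3 ∧ j = 3 then l12
  else if i = 1 ∧ j = 6 then l12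
  else if i = 2 ∧ j = 4 then 2 * q12 * l1 * l2
  else if i = 5 ∧ j = 5 then -(-q12) * l1 * l2
  else if i = 6 ∧ j = 6 then -q12 * l2 * l12
  else if i = 4 ∧ j = 2 then 2 * q12 * l1 * l2 + l12
  else if i = 4 ∧ j = 4 then q12 * l12 * l1 + 4 * l1 ^ 2 * l2
  else if i = 7 ∧ j = 7 then q12 * l2 * l12 * l1
  else 0

/-- The cocycle `ξ0`. -/
def xi0 (bB : Module.Basis (Fin 8) k B) : B →ₗ[k] B →ₗ[k] k := ofMat k bB (mXi0 k)

/-- The cocycle `ξ1`. -/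
def xi1 (bB : Module.Basis (Fin 8) k B) : B →ₗ[k] B →ₗ[k] k := ofMat k bB (mXi1 k)

/-- The cocycle `ξ2`. -/
def xi2 (bB : Module.Basis (Fin 8) k B) : B →ₗ[k] B →ₗ[k] k := ofMat k bB (mXi2 k)

/-- The cocycle `ξ121`. -/
def xi121 (q12 : k) (bB : Module.Basis (Fin 8) k B) : B →ₗ[k] B →ₗ[k] k :=
  ofMat k bB (mXi121 k q12)

/-- The cocycle `ξ212`. -/
def xi212 (bB : Module.Basis (Fin 8) k B) : B →ₗ[k] B →ₗ[k] k := ofMat k bB (mXi212 k)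

/-- Number of occurrences of the letter `x1` in each basis monomial. -/
def n1 : Fin 8 → ℕ := ![0, 1, 0, 1, 2, 1, 1, 2]

/-- Number of occurrences of the letter `x2` in each basis monomial. -/
def n2 : Fin 8 → ℕ := ![0, 0, 1, 1, 1, 1, 2, 2]

/-- `χ_{b_j}(g_i)`: the scalar with `g_i b_j g_i⁻¹ = χ_{b_j}(g_i) b_j`, namely
`q_{i1}^{n1(j)} q_{i2}^{n2(j)}` with `q11 = q22 = -1`, `q21 = -q12`. -/
def chiB (q12 : k) : Fin 2 → Fin 8 → k := fun i j =>
  if i = 0 then (-1 : k) ^ n1 j * q12 ^ n2 j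
  else (-q12) ^ n1 j * (-1 : k) ^ n2 j

/-- `χ_{b_j}(g1^a g2^c)`. -/
def chiG (q12 : k) (j : Fin 8) (a c : Fin 2) : k :=
  chiB k q12 0 j ^ (a : ℕ) * chiB k q12 1 j ^ (c : ℕ)

variable {A : Type*} [Ring A] [Bialgebra k A]

/-- The extension `η_A : A ⊗ A →ₗ k` of a bilinear form `η` on `B`, determined on the
basis of `A ⊗ A` by `η_A(b g ⊗ b' g') = χ_{b'}(g) η(b, b')`. -/
def extA (q12 : k) (bB : Module.Basis (Fin 8) k B)
    (bA : Module.Basis (Fin 8 × Fin 2 × Fin 2) k A)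
    (η : B →ₗ[k] B →ₗ[k] k) : A ⊗[k] A →ₗ[k] k :=
  (bA.tensorProduct bA).constr k fun p =>
    chiG k q12 p.2.1 p.1.2.1 p.1.2.2 * η (bB p.1.1) (bB p.2.1)

/-- The Hopf 2-cocycle `σ_λ : A ⊗ A → k` associated to the cleft object `E(λ)`. -/
def sigmaLam (q12 : k) (bB : Module.Basis (Fin 8) k B)
    (bA : Module.Basis (Fin 8 × Fin 2 × Fin 2) k A) (l1 l2 l12 : k) : A ⊗[k] A →ₗ[k] k :=
  extA k q12 bB bA (ofMat k bB (mT k q12 l1 l2 l12))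

end Bside

/-- All defining data of the situation of the paper: `q12 = ±1`; `B` is the Nichols algebra
of Cartan type `A₂` with `q = -1` (presented by `x1² = x2² = x12² = 0`, with its PBW basis
and its augmentation `εB`), and `A = B # H` is a Hopf algebra containing `x1, x2, g1, g2`
subject to the group/commutation relations, with its basis `{b g1^a g2^c}` and the standard
comultiplication and counit on generators. -/
structure Setup (q12 : k) {B : Type*} [Ring B] [Algebra k B] (X1 X2 : B)
    (bB : Module.Basis (Fin 8) k B) (εB : B →ₐ[k] k)
    {A : Type*} [Ring A] [HopfAlgebra k A] (a1 a2 g1 g2 : A)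
    (bA : Module.Basis (Fin 8 × Fin 2 × Fin 2) k A) : Prop where
  hq : q12 = 1 ∨ q12 = -1
  hbB : ∀ j, bB j = bbVec k q12 X1 X2 j
  hX1 : X1 ^ 2 = 0
  hX2 : X2 ^ 2 = 0
  hX12 : x12 k q12 X1 X2 ^ 2 = 0
  hε1 : εB X1 = 0
  hε2 : εB X2 = 0
  hbA : ∀ p : Fin 8 × Fin 2 × Fin 2,
    bA p = bbVec k q12 a1 a2 p.1 * g1 ^ (p.2.1 : ℕ) * g2 ^ (p.2.2 : ℕ)
  hg1 : g1 ^ 2 = 1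
  hg2 : g2 ^ 2 = 1
  hgg : g1 * g2 = g2 * g1
  hg1a1 : g1 * a1 = (-1 : k) • (a1 * g1)
  hg1a2 : g1 * a2 = q12 • (a2 * g1)
  hg2a1 : g2 * a1 = (-q12) • (a1 * g2)
  hg2a2 : g2 * a2 = (-1 : k) • (a2 * g2)
  ha1 : a1 ^ 2 = 0
  ha2 : a2 ^ 2 = 0
  ha12 : x12 k q12 a1 a2 ^ 2 = 0
  hcomul_g1 : Coalgebra.comul (R := k) g1 = g1 ⊗ₜ[k] g1
  hcomul_g2 : Coalgebra.comul (R := k) g2 = g2 ⊗ₜ[k] g2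
  hcomul_a1 : Coalgebra.comul (R := k) a1 = a1 ⊗ₜ[k] 1 + g1 ⊗ₜ[k] a1
  hcomul_a2 : Coalgebra.comul (R := k) a2 = a2 ⊗ₜ[k] 1 + g2 ⊗ₜ[k] a2
  hcounit_g1 : Coalgebra.counit (R := k) g1 = 1
  hcounit_g2 : Coalgebra.counit (R := k) g2 = 1
  hcounit_a1 : Coalgebra.counit (R := k) a1 = 0
  hcounit_a2 : Coalgebra.counit (R := k) a2 = 0

end Defs

/-!
The cocycle identity is trilinear, so it suffices to check it on triples of PBW basis vectors.
There it becomes an identity between the structure constants of `B` in the PBW basis (computed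
from `x1² = x2² = 0` and `x1x2x1x2 = -x2x1x2x1`, which is `x12² = 0` once `q12² = 1`) and the
matrix of `ξ121`. For `q12 = ±1` this identity is the image of an identity over `ℤ`, which is
checked by evaluation.
-/

section Hochschild

variable {k : Type*} [Field k] {B : Type*} [Ring B] [Algebra k B]

def hochschildDiff (ε : B →ₐ[k] k) (η : B →ₗ[k] B →ₗ[k] k) :
    B →ₗ[k] B →ₗ[k] B →ₗ[k] k :=
  LinearMap.mk₂ k
    (fun a b => ε a • η b - η (a * b) + η a ∘ₗ LinearMap.mulLeft k b - η a b • ε.toLinearMap)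
    (fun a a' b => by ext c; simp [add_mul]; ring)
    (fun r a b => by ext c; simp [mul_sub, mul_add]; ring)
    (fun a b b' => by ext c; simp [add_mul, mul_add]; ring)
    (fun r a b => by ext c; simp [mul_sub, mul_add]; ring)

theorem hochschildDiff_apply (ε : B →ₐ[k] k) (η : B →ₗ[k] B →ₗ[k] k) (a b c : B) :
    hochschildDiff ε η a b c = ε a * η b c - η (a * b) c + η a (b * c) - η a b * ε c := by
  simp [hochschildDiff]

theorem isHochschild2Cocycle_iff_hochschildDiff_eq_zero (ε : B →ₐ[k] k)
    (η : B →ₗ[k] B →ₗ[k] k) : IsHochschild2Cocycle k ε η ↔ hochschildDiff ε η = 0 := by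
  simp only [IsHochschild2Cocycle, LinearMap.ext_iff, hochschildDiff_apply, LinearMap.zero_apply]
  refine forall₃_congr fun a b c => ?_
  constructor <;> intro h <;> linear_combination h

theorem isHochschild2Cocycle_of_basis {ι : Type*} (b : Module.Basis ι k B) (ε : B →ₐ[k] k)
    (η : B →ₗ[k] B →ₗ[k] k)
    (h : ∀ i j l, ε (b i) * η (b j) (b l) + η (b i) (b j * b l)
      = η (b i * b j) (b l) + η (b i) (b j) * ε (b l)) :
    IsHochschild2Cocycle k ε η := by
  rw [isHochschild2Cocycle_iff_hochschildDiff_eq_zero]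
  refine LinearMap.ext_basis b b fun i j => b.ext fun l => ?_
  rw [hochschildDiff_apply, LinearMap.zero_apply, LinearMap.zero_apply, LinearMap.zero_apply]
  linear_combination h i j l

theorem ofMat_apply_basis (bB : Module.Basis (Fin 8) k B) (M : Fin 8 → Fin 8 → k)
    (i j : Fin 8) : ofMat k bB M (bB i) (bB j) = M i j := by
  simp [ofMat]

theorem isHochschild2Cocycle_ofMat (bB : Module.Basis (Fin 8) k B) (ε : B →ₐ[k] k)
    (M : Fin 8 → Fin 8 → k) (P : Fin 8 → Fin 8 → Fin 8 → k) (c : Fin 8 → k)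
    (hmul : ∀ i j, bB i * bB j = ∑ m, P i j m • bB m) (hε : ∀ i, ε (bB i) = c i)
    (hM : ∀ i j l, c i * M j l + ∑ m, P j l m * M i m = ∑ m, P i j m * M m l + M i j * c l) :
    IsHochschild2Cocycle k ε (ofMat k bB M) := by
  refine isHochschild2Cocycle_of_basis bB ε _ fun i j l => ?_
  simp only [hmul, hε, map_sum, map_smul, LinearMap.sum_apply, LinearMap.smul_apply,
    smul_eq_mul, ofMat_apply_basis]
  exact hM i j l

end Hochschild

section Coefficients

variable {R S : Type*} [Ring R] [Ring S]

def bbMulCoeff (q : R) : Fin 8 → Fin 8 → Fin 8 → R := fun i j m =>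
  if i = 0 then (if m = j then 1 else 0)
  else if j = 0 then (if m = i then 1 else 0)
  else if i = 1 ∧ j = 2 then (if m = 3 then 1 else if m = 5 then q else 0)
  else if i = 1 ∧ j = 3 then (if m = 4 then -q else 0)
  else if i = 1 ∧ j = 5 then (if m = 4 then 1 else 0)
  else if i = 1 ∧ j = 6 then (if m = 7 then -1 else 0)
  else if i = 2 ∧ j = 1 then (if m = 5 then 1 else 0)
  else if i = 2 ∧ j = 3 then (if m = 6 then 1 else 0)
  else if i = 2 ∧ j = 4 then (if m = 7 then 1 else 0)
  else if i = 3 ∧ j = 1 then (if m = 4 then 1 else 0)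
  else if i = 3 ∧ j = 2 then (if m = 6 then -q else 0)
  else if i = 3 ∧ j = 5 then (if m = 7 then -q else 0)
  else if i = 4 ∧ j = 2 then (if m = 7 then -1 else 0)
  else if i = 5 ∧ j = 2 then (if m = 6 then 1 else 0)
  else if i = 5 ∧ j = 3 then (if m = 7 then -q else 0)
  else if i = 5 ∧ j = 5 then (if m = 7 then 1 else 0)
  else if i = 6 ∧ j = 1 then (if m = 7 then 1 else 0)
  else 0

/-- `mXi121` over an arbitrary ring (over a field `k`, `mXi121 k q = xi121Coeff q` by `rfl`),
so that it can be evaluated in `ℤ`. -/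
def xi121Coeff (q : R) : Fin 8 → Fin 8 → R := fun i j =>
  if i = 2 ∧ j = 4 then 1
  else if i = 6 ∧ j = 1 then 1
  else if i = 5 ∧ j = 5 then 1
  else if i = 3 ∧ j = 3 then 1
  else if i = 3 ∧ j = 5 then -q
  else if i = 5 ∧ j = 3 then -q
  else 0

theorem map_bbMulCoeff (f : R →+* S) (q : R) (i j m : Fin 8) :
    f (bbMulCoeff q i j m) = bbMulCoeff (f q) i j m := by
  simp only [bbMulCoeff, apply_ite f, map_one, map_zero, map_neg]

theorem map_xi121Coeff (f : R →+* S) (q : R) (i j : Fin 8) :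
    f (xi121Coeff q i j) = xi121Coeff (f q) i j := by
  simp only [xi121Coeff, apply_ite f, map_one, map_zero, map_neg]

theorem xi121Coeff_hochschild_int (e : ℤ) (he : e = 1 ∨ e = -1) (i j l : Fin 8) :
    (if i = 0 then 1 else 0) * xi121Coeff e j l + ∑ m, bbMulCoeff e j l m * xi121Coeff e i m
      = ∑ m, bbMulCoeff e i j m * xi121Coeff e m l
        + xi121Coeff e i j * (if l = 0 then 1 else 0) := by
  revert i j l
  rcases he with rfl | rfl <;> decide

theorem xi121Coeff_hochschild (q : R) (hq : q = 1 ∨ q = -1) (i j l : Fin 8) :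
    (if i = 0 then 1 else 0) * xi121Coeff q j l + ∑ m, bbMulCoeff q j l m * xi121Coeff q i m
      = ∑ m, bbMulCoeff q i j m * xi121Coeff q m l
        + xi121Coeff q i j * (if l = 0 then 1 else 0) := by
  obtain ⟨e, he, rfl⟩ : ∃ e : ℤ, (e = 1 ∨ e = -1) ∧ (e : R) = q := by
    rcases hq with rfl | rfl
    exacts [⟨1, Or.inl rfl, Int.cast_one⟩, ⟨-1, Or.inr rfl, by simp⟩]
  have h := congrArg (Int.castRingHom R) (xi121Coeff_hochschild_int e he i j l)
  simp only [map_add, map_mul, map_sum, apply_ite (Int.castRingHom R), map_one, map_zero,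
    map_bbMulCoeff, map_xi121Coeff] at h
  simpa only [eq_intCast] using h

end Coefficients

section PBW

variable {k : Type*} [Field k] {B : Type*} [Ring B] [Algebra k B]

theorem x12_sq_eq (q : k) (hq2 : q * q = 1) {X1 X2 : B} (hX1 : X1 * X1 = 0)
    (hX2 : X2 * X2 = 0) :
    x12 k q X1 X2 ^ 2 = X1 * (X2 * (X1 * X2)) + X2 * (X1 * (X2 * X1)) := by
  have hX1' : ∀ z : B, X1 * (X1 * z) = 0 := fun z => by rw [← mul_assoc, hX1, zero_mul]
  have hX2' : ∀ z : B, X2 * (X2 * z) = 0 := fun z => by rw [← mul_assoc, hX2, zero_mul]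
  simp [x12, pow_two, sub_mul, mul_sub, smul_smul, mul_assoc, hX1', hX2', hq2]

theorem bbVec_mul (q : k) (hq2 : q * q = 1) {X1 X2 : B} (hX1 : X1 ^ 2 = 0)
    (hX2 : X2 ^ 2 = 0) (hX12 : x12 k q X1 X2 ^ 2 = 0) (i j : Fin 8) :
    bbVec k q X1 X2 i * bbVec k q X1 X2 j = ∑ m, bbMulCoeff q i j m • bbVec k q X1 X2 m := by
  rw [pow_two] at hX1 hX2
  have hX1' : ∀ z : B, X1 * (X1 * z) = 0 := fun z => by rw [← mul_assoc, hX1, zero_mul]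
  have hX2' : ∀ z : B, X2 * (X2 * z) = 0 := fun z => by rw [← mul_assoc, hX2, zero_mul]
  have hrel : X1 * (X2 * (X1 * X2)) = -(X2 * (X1 * (X2 * X1))) :=
    eq_neg_of_add_eq_zero_left (by rw [← x12_sq_eq q hq2 hX1 hX2, hX12])
  have hrel' : ∀ z : B, X1 * (X2 * (X1 * (X2 * z))) = -(X2 * (X1 * (X2 * (X1 * z)))) :=
    fun z => by simpa only [mul_assoc, neg_mul] using congrArg (· * z) hrel
  fin_cases i <;> fin_cases j <;>
    simp [bbVec, x12, bbMulCoeff, Fin.sum_univ_eight, mul_sub, sub_mul, smul_smul, mul_assoc,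
      hX1, hX2, hX1', hX2', hrel, hrel', hq2]

theorem algHom_apply_bbVec (q : k) {X1 X2 : B} (ε : B →ₐ[k] k) (hε1 : ε X1 = 0)
    (hε2 : ε X2 = 0) (i : Fin 8) : ε (bbVec k q X1 X2 i) = if i = 0 then 1 else 0 := by
  fin_cases i <;> simp [bbVec, x12, hε1, hε2]

end PBW

theorem statement_7_general {k : Type*} [Field k] (q12 : k) (hq : q12 = 1 ∨ q12 = -1)
    {B : Type*} [Ring B] [Algebra k B] (X1 X2 : B)
    (bB : Module.Basis (Fin 8) k B) (hbB : ∀ j, bB j = bbVec k q12 X1 X2 j)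
    (hX1 : X1 ^ 2 = 0) (hX2 : X2 ^ 2 = 0) (hX12 : x12 k q12 X1 X2 ^ 2 = 0)
    (εB : B →ₐ[k] k) (hε1 : εB X1 = 0) (hε2 : εB X2 = 0) :
    IsHochschild2Cocycle k εB (xi121 k q12 bB) := by
  have hq2 : q12 * q12 = 1 := by rcases hq with rfl | rfl <;> norm_num
  refine isHochschild2Cocycle_ofMat bB εB _ (bbMulCoeff q12) (fun i => if i = 0 then 1 else 0)
    (fun i j => ?_) (fun i => ?_) (xi121Coeff_hochschild q12 hq)
  · simp only [hbB, bbVec_mul q12 hq2 hX1 hX2 hX12]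
  · rw [hbB, algHom_apply_bbVec q12 εB hε1 hε2]

/-- The bilinear form `ξ121` is a Hochschild 2-cocycle on `B`. -/
theorem statement_7 {k : Type*} [Field k] [CharZero k] (q12 : k) (hq : q12 = 1 ∨ q12 = -1)
    {B : Type*} [Ring B] [Algebra k B] (X1 X2 : B)
    (bB : Module.Basis (Fin 8) k B) (hbB : ∀ j, bB j = bbVec k q12 X1 X2 j)
    (hX1 : X1 ^ 2 = 0) (hX2 : X2 ^ 2 = 0) (hX12 : x12 k q12 X1 X2 ^ 2 = 0)
    (εB : B →ₐ[k] k) (hε1 : εB X1 = 0) (hε2 : εB X2 = 0) :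
    IsHochschild2Cocycle k εB (xi121 k q12 bB) :=
  statement_7_general q12 hq X1 X2 bB hbB hX1 hX2 hX12 εB hε1 hε2

end PaperA2
end
end

section
/- Let x and y be elements of the homogeneous basis BB of degree 1. Then the bilinear form xi : B x B -> k determined on BB x BB by xi(b, b') = 1 if (b, b') = (y, x) and xi(b, b') = 0 for all other pairs of basis elements is a Hochschild 2-cocycle on B. -/
/-!
Common framework: convolution algebras, Hopf 2-cocycles, the Nichols algebra `B` of Cartan
type `A₂` with `q = -1`, its bosonization `A = B # H`, bilinear forms on `B` and their
extensions to `A ⊗ A`, following García–Sánchez, "Hopf cocycles associated to pointed and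
copointed deformations over S₃" (arXiv:2108.11432).
-/

open scoped TensorProduct
open TensorProduct

noncomputable section

namespace PaperA2

/-!
Writing `x*`, `y*` for the coordinate functionals of the degree-one basis vectors, the form is
`ξ(a, b) = y*(a) x*(b)`. In a connected graded algebra a functional vanishing outside degree `1`
is an `ε`-derivation, and the cup product of two `ε`-derivations is a Hochschild 2-cocycle.
-/

section HomogeneousBasis

variable {R M ι κ : Type*} [CommSemiring R] [AddCommMonoid M] [Module R M] [DecidableEq ι]
  (𝒜 : ι → Submodule R M) [DirectSum.Decomposition 𝒜] {b : Module.Basis κ R M}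

def gradedProj (d : ι) : M →ₗ[R] M :=
  (𝒜 d).subtype ∘ₗ DirectSum.component R ι (fun n => 𝒜 n) d ∘ₗ
    (DirectSum.decomposeLinearEquiv 𝒜).toLinearMap

theorem gradedProj_apply (d : ι) (x : M) :
    gradedProj 𝒜 d x = (DirectSum.decompose 𝒜 x d : M) := rfl

theorem coord_gradedProj [Nontrivial R] (hhom : ∀ i, ∃ n, b i ∈ 𝒜 n) {j : κ} {d : ι}
    (hj : b j ∈ 𝒜 d) :
    b.coord j ∘ₗ gradedProj 𝒜 d = b.coord j := by
  refine b.ext fun i => ?_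
  obtain ⟨n, hn⟩ := hhom i
  by_cases hnd : n = d
  · subst hnd
    simp [gradedProj_apply, DirectSum.decompose_of_mem_same 𝒜 hn]
  · have hij : i ≠ j := by
      rintro rfl
      exact hnd (DirectSum.degree_eq_of_mem_mem 𝒜 hn hj (b.ne_zero i))
    simp [gradedProj_apply, DirectSum.decompose_of_mem_ne 𝒜 hn hnd, hij]

theorem coord_eq_zero_of_mem_ne [Nontrivial R] (hhom : ∀ i, ∃ n, b i ∈ 𝒜 n) {j : κ} {d m : ι}
    (hj : b j ∈ 𝒜 d) (hmd : m ≠ d) {x : M} (hx : x ∈ 𝒜 m) : b.coord j x = 0 := by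
  rw [← coord_gradedProj 𝒜 hhom hj, LinearMap.comp_apply, gradedProj_apply,
    DirectSum.decompose_of_mem_ne 𝒜 hx hmd, map_zero]

end HomogeneousBasis

theorem mul_eq_smul_of_left_mem_span_one {R A : Type*} [CommSemiring R] [Semiring A]
    [Algebra R A] (ε : A →ₐ[R] R) {a : A} (ha : a ∈ Submodule.span R {(1 : A)}) (b : A) :
    a * b = ε a • b := by
  obtain ⟨c, rfl⟩ := Submodule.mem_span_singleton.mp ha
  simp

theorem mul_eq_smul_of_right_mem_span_one {R A : Type*} [CommSemiring R] [Semiring A]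
    [Algebra R A] (ε : A →ₐ[R] R) (a : A) {b : A} (hb : b ∈ Submodule.span R {(1 : A)}) :
    a * b = ε b • a := by
  obtain ⟨c, rfl⟩ := Submodule.mem_span_singleton.mp hb
  simp

section ConnectedGraded

variable {R A : Type*} [CommRing R] [Ring A] [Algebra R A]
  (𝒜 : ℕ → Submodule R A) [GradedAlgebra 𝒜] (h0 : 𝒜 0 = Submodule.span R {(1 : A)})
  (ε : A →ₐ[R] R) (hε : ∀ n : ℕ, n ≠ 0 → ∀ a ∈ 𝒜 n, ε a = 0)
include h0 hε

theorem map_mul_of_vanishing_off_one {f : A →ₗ[R] R}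
    (hf : ∀ m : ℕ, m ≠ 1 → ∀ a ∈ 𝒜 m, f a = 0) (a b : A) :
    f (a * b) = ε a * f b + f a * ε b := by
  induction a using DirectSum.Decomposition.inductionOn 𝒜 with
  | zero => simp
  | add a a' ha ha' => simp only [add_mul, map_add, ha, ha']; ring
  | @homogeneous m a =>
  induction b using DirectSum.Decomposition.inductionOn 𝒜 with
  | zero => simp
  | add b b' hb hb' => simp only [mul_add, map_add, hb, hb']; ring
  | @homogeneous n b =>
  obtain ⟨a, ha⟩ := a
  obtain ⟨b, hb⟩ := b
  dsimp only
  rcases Nat.eq_zero_or_pos m with rfl | hm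
  · rw [mul_eq_smul_of_left_mem_span_one ε (h0 ▸ ha), hf 0 zero_ne_one _ ha, map_smul,
      smul_eq_mul]
    ring
  rcases Nat.eq_zero_or_pos n with rfl | hn
  · rw [mul_eq_smul_of_right_mem_span_one ε a (h0 ▸ hb), hf 0 zero_ne_one _ hb, map_smul,
      smul_eq_mul]
    ring
  rw [hε m hm.ne' a ha, hε n hn.ne' b hb,
    hf (m + n) (by omega) _ (SetLike.mul_mem_graded ha hb)]
  ring

end ConnectedGraded

theorem isHochschild2Cocycle_smulRight {k B : Type*} [Field k] [Ring B] [Algebra k B]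
    {ε : B →ₐ[k] k} {φ ψ : B →ₗ[k] k}
    (hφ : ∀ a b, φ (a * b) = ε a * φ b + φ a * ε b)
    (hψ : ∀ a b, ψ (a * b) = ε a * ψ b + ψ a * ε b) :
    IsHochschild2Cocycle k ε (φ.smulRight ψ) := by
  intro a b c
  simp only [LinearMap.smulRight_apply, LinearMap.smul_apply, smul_eq_mul, hφ, hψ]
  ring

theorem constr_ite_eq_smulRight {k M ι : Type*} [Field k] [AddCommGroup M] [Module k M]
    [DecidableEq ι] (b : Module.Basis ι k M) (i₀ j₀ : ι) :
    (b.constr k fun i => b.constr k fun j => if i = i₀ ∧ j = j₀ then (1 : k) else 0)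
      = (b.coord i₀).smulRight (b.coord j₀) := by
  refine b.ext fun i => b.ext fun j => ?_
  by_cases hi : i = i₀ <;> by_cases hj : j = j₀ <;> simp [hi, hj, Ne.symm]

theorem statement_9_general {k : Type*} [Field k] {B : Type*} [Ring B] [Algebra k B]
    (𝒜 : ℕ → Submodule k B) [GradedAlgebra 𝒜]
    (h0 : 𝒜 0 = Submodule.span k {(1 : B)})
    (ε : B →ₐ[k] k) (hε : ∀ n : ℕ, n ≠ 0 → ∀ b ∈ 𝒜 n, ε b = 0)
    {ι : Type*} [DecidableEq ι] (bb : Module.Basis ι k B)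
    (hhom : ∀ i : ι, ∃ n : ℕ, bb i ∈ 𝒜 n)
    (ix iy : ι) (hx : bb ix ∈ 𝒜 1) (hy : bb iy ∈ 𝒜 1) :
    IsHochschild2Cocycle k ε
      (bb.constr k fun i => bb.constr k fun j =>
        if i = iy ∧ j = ix then (1 : k) else 0) := by
  have coord_map_mul : ∀ j, bb j ∈ 𝒜 1 → ∀ a b : B,
      bb.coord j (a * b) = ε a * bb.coord j b + bb.coord j a * ε b := fun j hj =>
    map_mul_of_vanishing_off_one 𝒜 h0 ε hε fun _ hm _ => coord_eq_zero_of_mem_ne 𝒜 hhom hj hm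
  rw [constr_ite_eq_smulRight]
  exact isHochschild2Cocycle_smulRight (coord_map_mul iy hy) (coord_map_mul ix hx)

/-- Let `B` be an `ℕ`-graded algebra with `B₀ = k·1`, `ε` the projection
onto degree `0`, and `BB` a homogeneous basis containing `1`.  If `x = bb ix` and
`y = bb iy` are basis elements of degree `1`, then the bilinear form with
`ξ(b, b') = δ_{(b,b'),(y,x)}` on basis elements is a Hochschild 2-cocycle on `B`. -/
theorem statement_9 {k : Type*} [Field k] {B : Type*} [Ring B] [Algebra k B]
    (𝒜 : ℕ → Submodule k B) [GradedAlgebra 𝒜]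
    (h0 : 𝒜 0 = Submodule.span k {(1 : B)})
    (ε : B →ₐ[k] k) (hε : ∀ n : ℕ, n ≠ 0 → ∀ b ∈ 𝒜 n, ε b = 0)
    {ι : Type*} [DecidableEq ι] (bb : Module.Basis ι k B)
    (hhom : ∀ i : ι, ∃ n : ℕ, bb i ∈ 𝒜 n)
    (i1 : ι) (hone : bb i1 = 1)
    (ix iy : ι) (hx : bb ix ∈ 𝒜 1) (hy : bb iy ∈ 𝒜 1) :
    IsHochschild2Cocycle k ε
      (bb.constr k fun i => bb.constr k fun j =>
        if i = iy ∧ j = ix then (1 : k) else 0) :=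
  statement_9_general 𝒜 h0 ε hε bb hhom ix iy hx hy

end PaperA2
end
end

section
/- Let gamma, gamma' : B -> E(lambda) be the linear maps determined on the basis BB by: gamma(1) = 1, gamma(x1) = y1, gamma(x2) = y2, gamma(x12) = y12, gamma(x2*x1) = y2*y1, gamma(x12*x1) = y12*y1 - 2*q21*lambda1*y2, gamma(x2*x12) = y2*y12, gamma(x2*x12*x1) = y2*y12*y1; and gamma'(1) = 1, gamma'(x1) = -y1, gamma'(x2) = -y2, gamma'(x12) = y12 + 2*q12*y2*y1, gamma'(x2*x1) = q21*y12 - y2*y1, gamma'(x12*x1) = -y12*y1 + 2*q21*lambda1*y2, gamma'(x2*x12) = -y2*y12, gamma'(x2*x12*x1) = y2*y12*y1 - lambda12. Then gamma * gamma' = gamma' * gamma = u o eps, that is, sum gamma(b_(1)) gamma'(b_(2)) = eps(b)*1 = sum gamma'(b_(1)) gamma(b_(2)) for all b in B; in particular gamma is convolution invertible with convolution inverse gamma'. -/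
/-!
Common framework: convolution algebras, Hopf 2-cocycles, the Nichols algebra `B` of Cartan
type `A₂` with `q = -1`, its bosonization `A = B # H`, bilinear forms on `B` and their
extensions to `A ⊗ A`, following García–Sánchez, "Hopf cocycles associated to pointed and
copointed deformations over S₃" (arXiv:2108.11432).
-/

open scoped TensorProduct
open TensorProduct

noncomputable section

namespace PaperA2

/-! Both identities are linear in `b`, so it suffices to check them on the PBW basis, where they
become finite computations in `E(λ)`: expand, reduce the squares `yᵢ²` to scalars, and use
`y12² = λ12` to eliminate the only other reducible word `y1 y2 y1 y2`. -/

theorem mul'_map_eq_smul_one_of_basis {k B E ι : Type*} [CommSemiring k] [AddCommMonoid B]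
    [Module k B] [Semiring E] [Algebra k E] (bB : Module.Basis ι k B)
    (Δ : B →ₗ[k] B ⊗[k] B) (ε : B →ₗ[k] k) (f g : B →ₗ[k] E)
    (h : ∀ i, LinearMap.mul' k E (map f g (Δ (bB i))) = ε (bB i) • 1) (b : B) :
    LinearMap.mul' k E (map f g (Δ b)) = ε b • 1 := by
  have hext : LinearMap.mul' k E ∘ₗ map f g ∘ₗ Δ = ε.smulRight 1 :=
    bB.ext fun i => by simpa using h i
  simpa using LinearMap.congr_fun hext b

theorem mul_mul_eq_smul_of_sq_eq_smul_one {k E : Type*} [CommSemiring k] [Semiring E]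
    [Algebra k E] {y : E} {c : k} (h : y ^ 2 = c • 1) (w : E) : y * (y * w) = c • w := by
  rw [← mul_assoc, ← sq, h, smul_mul_assoc, one_mul]

theorem mul_mul_mul_eq_of_x12_sq_eq_smul_one {k E : Type*} [Field k] [Ring E] [Algebra k E]
    {q l1 l2 l12 : k} (hq : q * q = 1) {Y1 Y2 : E} (hY1 : Y1 ^ 2 = l1 • 1)
    (hY2 : Y2 ^ 2 = l2 • 1) (hY12 : x12 k q Y1 Y2 ^ 2 = l12 • 1) :
    Y1 * (Y2 * (Y1 * Y2)) = (l12 + 2 * q * l1 * l2) • 1 - Y2 * (Y1 * (Y2 * Y1)) := by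
  rw [sq, x12] at hY12
  rw [eq_sub_iff_add_eq, add_smul, ← hY12]
  simp only [mul_sub, sub_mul, smul_mul_assoc, mul_smul_comm, smul_smul, mul_assoc,
    (sq Y1).symm.trans hY1, (sq Y2).symm.trans hY2, mul_mul_eq_smul_of_sq_eq_smul_one hY1,
    mul_mul_eq_smul_of_sq_eq_smul_one hY2]
  match_scalars <;> grind

theorem statement_11_general {k : Type*} [Field k] (q12 : k) (hq : q12 = 1 ∨ q12 = -1)
    {B : Type*} [Ring B] [Algebra k B] (X1 X2 : B)
    (bB : Module.Basis (Fin 8) k B) (hbB : ∀ j, bB j = bbVec k q12 X1 X2 j)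
    (εB : B →ₐ[k] k) (hε1 : εB X1 = 0) (hε2 : εB X2 = 0)
    (Δ : B →ₗ[k] B ⊗[k] B)
    (hΔ0 : Δ 1 = (1 : B) ⊗ₜ[k] (1 : B))
    (hΔ1 : Δ X1 = X1 ⊗ₜ[k] (1 : B) + (1 : B) ⊗ₜ[k] X1)
    (hΔ2 : Δ X2 = X2 ⊗ₜ[k] (1 : B) + (1 : B) ⊗ₜ[k] X2)
    (hΔ3 : Δ (x12 k q12 X1 X2) =
      (x12 k q12 X1 X2) ⊗ₜ[k] (1 : B) + (1 : B) ⊗ₜ[k] (x12 k q12 X1 X2) +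
        (2 : k) • (X1 ⊗ₜ[k] X2))
    (hΔ5 : Δ (X2 * X1) =
      (X2 * X1) ⊗ₜ[k] (1 : B) + (1 : B) ⊗ₜ[k] (X2 * X1) + X2 ⊗ₜ[k] X1 +
        (-q12) • (X1 ⊗ₜ[k] X2))
    (hΔ4 : Δ (x12 k q12 X1 X2 * X1) =
      (x12 k q12 X1 X2 * X1) ⊗ₜ[k] (1 : B) + (1 : B) ⊗ₜ[k] (x12 k q12 X1 X2 * X1) -
        (-q12) • (X1 ⊗ₜ[k] (x12 k q12 X1 X2)) + (x12 k q12 X1 X2) ⊗ₜ[k] X1 +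
        (2 : k) • (X1 ⊗ₜ[k] (X2 * X1)))
    (hΔ6 : Δ (X2 * x12 k q12 X1 X2) =
      (X2 * x12 k q12 X1 X2) ⊗ₜ[k] (1 : B) + (1 : B) ⊗ₜ[k] (X2 * x12 k q12 X1 X2) +
        X2 ⊗ₜ[k] (x12 k q12 X1 X2) - (-q12) • ((x12 k q12 X1 X2) ⊗ₜ[k] X2) +
        (2 : k) • ((X2 * X1) ⊗ₜ[k] X2))
    (hΔ7 : Δ (X2 * x12 k q12 X1 X2 * X1) =
      (X2 * x12 k q12 X1 X2 * X1) ⊗ₜ[k] (1 : B) +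
        (1 : B) ⊗ₜ[k] (X2 * x12 k q12 X1 X2 * X1) +
        (2 : k) • ((X2 * X1) ⊗ₜ[k] (X2 * X1)) - X1 ⊗ₜ[k] (X2 * x12 k q12 X1 X2) -
        (-q12) • ((x12 k q12 X1 X2) ⊗ₜ[k] (X2 * X1)) -
        (x12 k q12 X1 X2 * X1) ⊗ₜ[k] X2 + X2 ⊗ₜ[k] (x12 k q12 X1 X2 * X1) -
        (-q12) • ((X2 * X1) ⊗ₜ[k] (x12 k q12 X1 X2)) +
        (X2 * x12 k q12 X1 X2) ⊗ₜ[k] X1)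
    {E : Type*} [Ring E] [Algebra k E] (Y1 Y2 : E) (l1 l2 l12 : k)
    (hY1 : Y1 ^ 2 = l1 • (1 : E)) (hY2 : Y2 ^ 2 = l2 • (1 : E))
    (hY12 : x12 k q12 Y1 Y2 ^ 2 = l12 • (1 : E))
    (γ γ' : B →ₗ[k] E)
    (hγ0 : γ 1 = 1) (hγ1 : γ X1 = Y1) (hγ2 : γ X2 = Y2)
    (hγ3 : γ (x12 k q12 X1 X2) = x12 k q12 Y1 Y2)
    (hγ5 : γ (X2 * X1) = Y2 * Y1)
    (hγ4 : γ (x12 k q12 X1 X2 * X1) = x12 k q12 Y1 Y2 * Y1 - (2 * (-q12) * l1) • Y2)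
    (hγ6 : γ (X2 * x12 k q12 X1 X2) = Y2 * x12 k q12 Y1 Y2)
    (hγ7 : γ (X2 * x12 k q12 X1 X2 * X1) = Y2 * x12 k q12 Y1 Y2 * Y1)
    (hγ'0 : γ' 1 = 1) (hγ'1 : γ' X1 = -Y1) (hγ'2 : γ' X2 = -Y2)
    (hγ'3 : γ' (x12 k q12 X1 X2) = x12 k q12 Y1 Y2 + (2 * q12) • (Y2 * Y1))
    (hγ'5 : γ' (X2 * X1) = (-q12) • x12 k q12 Y1 Y2 - Y2 * Y1)
    (hγ'4 : γ' (x12 k q12 X1 X2 * X1) =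
      -(x12 k q12 Y1 Y2 * Y1) + (2 * (-q12) * l1) • Y2)
    (hγ'6 : γ' (X2 * x12 k q12 X1 X2) = -(Y2 * x12 k q12 Y1 Y2))
    (hγ'7 : γ' (X2 * x12 k q12 X1 X2 * X1) = Y2 * x12 k q12 Y1 Y2 * Y1 - l12 • (1 : E)) :
    (∀ b : B, LinearMap.mul' k E (TensorProduct.map γ γ' (Δ b)) = εB b • (1 : E)) ∧
    (∀ b : B, LinearMap.mul' k E (TensorProduct.map γ' γ (Δ b)) = εB b • (1 : E)) := by
  have hq2 : q12 * q12 = 1 := by rcases hq with rfl | rfl <;> norm_num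
  have hY1212 := mul_mul_mul_eq_of_x12_sq_eq_smul_one hq2 hY1 hY2 hY12
  refine ⟨mul'_map_eq_smul_one_of_basis bB Δ εB.toLinearMap γ γ' fun j => ?_,
    mul'_map_eq_smul_one_of_basis bB Δ εB.toLinearMap γ' γ fun j => ?_⟩ <;>
  · rw [hbB]
    -- `Δ`, `γ`, `γ'` must be evaluated before `x12` is unfolded, or their equations stop matching.
    fin_cases j <;>
    simp only [bbVec, Fin.zero_eta, Fin.mk_one, Fin.reduceFinMk, Matrix.cons_val,
      hΔ0, hΔ1, hΔ2, hΔ3, hΔ4, hΔ5, hΔ6, hΔ7, map_add, map_sub, map_smul, map_tmul,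
      LinearMap.mul'_apply, hγ0, hγ1, hγ2, hγ3, hγ4, hγ5, hγ6, hγ7,
      hγ'0, hγ'1, hγ'2, hγ'3, hγ'4, hγ'5, hγ'6, hγ'7, AlgHom.toLinearMap_apply] <;>
    simp only [x12, map_one, map_mul, map_sub, map_smul, hε1, hε2, mul_zero, smul_zero,
      sub_zero, zero_smul, mul_add, add_mul, mul_sub, sub_mul, neg_mul, mul_neg, smul_mul_assoc,
      mul_smul_comm, smul_smul, mul_assoc, mul_one, one_mul, (sq Y1).symm.trans hY1,
      (sq Y2).symm.trans hY2, mul_mul_eq_smul_of_sq_eq_smul_one hY1,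
      mul_mul_eq_smul_of_sq_eq_smul_one hY2, hY1212, smul_add, smul_sub, smul_neg] <;>
    match_scalars <;> rcases hq with rfl | rfl <;> ring

/-- With `γ, γ' : B → E(λ)` the linear maps determined on the PBW basis
as in Lemma 5.1 of the paper, `γ * γ' = γ' * γ = u ∘ ε`; i.e., `γ` is convolution
invertible with convolution inverse `γ'`. -/
theorem statement_11 {k : Type*} [Field k] [CharZero k] (q12 : k) (hq : q12 = 1 ∨ q12 = -1)
    {B : Type*} [Ring B] [Algebra k B] (X1 X2 : B)
    (bB : Module.Basis (Fin 8) k B) (hbB : ∀ j, bB j = bbVec k q12 X1 X2 j)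
    (hX1 : X1 ^ 2 = 0) (hX2 : X2 ^ 2 = 0) (hX12 : x12 k q12 X1 X2 ^ 2 = 0)
    (εB : B →ₐ[k] k) (hε1 : εB X1 = 0) (hε2 : εB X2 = 0)
    (Δ : B →ₗ[k] B ⊗[k] B)
    (hΔ0 : Δ 1 = (1 : B) ⊗ₜ[k] (1 : B))
    (hΔ1 : Δ X1 = X1 ⊗ₜ[k] (1 : B) + (1 : B) ⊗ₜ[k] X1)
    (hΔ2 : Δ X2 = X2 ⊗ₜ[k] (1 : B) + (1 : B) ⊗ₜ[k] X2)
    (hΔ3 : Δ (x12 k q12 X1 X2) =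
      (x12 k q12 X1 X2) ⊗ₜ[k] (1 : B) + (1 : B) ⊗ₜ[k] (x12 k q12 X1 X2) +
        (2 : k) • (X1 ⊗ₜ[k] X2))
    (hΔ5 : Δ (X2 * X1) =
      (X2 * X1) ⊗ₜ[k] (1 : B) + (1 : B) ⊗ₜ[k] (X2 * X1) + X2 ⊗ₜ[k] X1 +
        (-q12) • (X1 ⊗ₜ[k] X2))
    (hΔ4 : Δ (x12 k q12 X1 X2 * X1) =
      (x12 k q12 X1 X2 * X1) ⊗ₜ[k] (1 : B) + (1 : B) ⊗ₜ[k] (x12 k q12 X1 X2 * X1) -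
        (-q12) • (X1 ⊗ₜ[k] (x12 k q12 X1 X2)) + (x12 k q12 X1 X2) ⊗ₜ[k] X1 +
        (2 : k) • (X1 ⊗ₜ[k] (X2 * X1)))
    (hΔ6 : Δ (X2 * x12 k q12 X1 X2) =
      (X2 * x12 k q12 X1 X2) ⊗ₜ[k] (1 : B) + (1 : B) ⊗ₜ[k] (X2 * x12 k q12 X1 X2) +
        X2 ⊗ₜ[k] (x12 k q12 X1 X2) - (-q12) • ((x12 k q12 X1 X2) ⊗ₜ[k] X2) +
        (2 : k) • ((X2 * X1) ⊗ₜ[k] X2))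
    (hΔ7 : Δ (X2 * x12 k q12 X1 X2 * X1) =
      (X2 * x12 k q12 X1 X2 * X1) ⊗ₜ[k] (1 : B) +
        (1 : B) ⊗ₜ[k] (X2 * x12 k q12 X1 X2 * X1) +
        (2 : k) • ((X2 * X1) ⊗ₜ[k] (X2 * X1)) - X1 ⊗ₜ[k] (X2 * x12 k q12 X1 X2) -
        (-q12) • ((x12 k q12 X1 X2) ⊗ₜ[k] (X2 * X1)) -
        (x12 k q12 X1 X2 * X1) ⊗ₜ[k] X2 + X2 ⊗ₜ[k] (x12 k q12 X1 X2 * X1) -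
        (-q12) • ((X2 * X1) ⊗ₜ[k] (x12 k q12 X1 X2)) +
        (X2 * x12 k q12 X1 X2) ⊗ₜ[k] X1)
    (hcoassoc : (TensorProduct.assoc k B B B).toLinearMap ∘ₗ
        TensorProduct.map Δ LinearMap.id ∘ₗ Δ = TensorProduct.map LinearMap.id Δ ∘ₗ Δ)
    (hcounitl : ∀ b : B,
      TensorProduct.lid k B (TensorProduct.map εB.toLinearMap LinearMap.id (Δ b)) = b)
    (hcounitr : ∀ b : B,
      TensorProduct.rid k B (TensorProduct.map LinearMap.id εB.toLinearMap (Δ b)) = b)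
    {E : Type*} [Ring E] [Algebra k E] (Y1 Y2 : E) (l1 l2 l12 : k)
    (hY1 : Y1 ^ 2 = l1 • (1 : E)) (hY2 : Y2 ^ 2 = l2 • (1 : E))
    (hY12 : x12 k q12 Y1 Y2 ^ 2 = l12 • (1 : E))
    (γ γ' : B →ₗ[k] E)
    (hγ0 : γ 1 = 1) (hγ1 : γ X1 = Y1) (hγ2 : γ X2 = Y2)
    (hγ3 : γ (x12 k q12 X1 X2) = x12 k q12 Y1 Y2)
    (hγ5 : γ (X2 * X1) = Y2 * Y1)
    (hγ4 : γ (x12 k q12 X1 X2 * X1) = x12 k q12 Y1 Y2 * Y1 - (2 * (-q12) * l1) • Y2)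
    (hγ6 : γ (X2 * x12 k q12 X1 X2) = Y2 * x12 k q12 Y1 Y2)
    (hγ7 : γ (X2 * x12 k q12 X1 X2 * X1) = Y2 * x12 k q12 Y1 Y2 * Y1)
    (hγ'0 : γ' 1 = 1) (hγ'1 : γ' X1 = -Y1) (hγ'2 : γ' X2 = -Y2)
    (hγ'3 : γ' (x12 k q12 X1 X2) = x12 k q12 Y1 Y2 + (2 * q12) • (Y2 * Y1))
    (hγ'5 : γ' (X2 * X1) = (-q12) • x12 k q12 Y1 Y2 - Y2 * Y1)
    (hγ'4 : γ' (x12 k q12 X1 X2 * X1) =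
      -(x12 k q12 Y1 Y2 * Y1) + (2 * (-q12) * l1) • Y2)
    (hγ'6 : γ' (X2 * x12 k q12 X1 X2) = -(Y2 * x12 k q12 Y1 Y2))
    (hγ'7 : γ' (X2 * x12 k q12 X1 X2 * X1) = Y2 * x12 k q12 Y1 Y2 * Y1 - l12 • (1 : E)) :
    (∀ b : B, LinearMap.mul' k E (TensorProduct.map γ γ' (Δ b)) = εB b • (1 : E)) ∧
    (∀ b : B, LinearMap.mul' k E (TensorProduct.map γ' γ (Δ b)) = εB b • (1 : E)) :=
  statement_11_general q12 hq X1 X2 bB hbB εB hε1 hε2 Δ hΔ0 hΔ1 hΔ2 hΔ3 hΔ5 hΔ4 hΔ6 hΔ7 Y1 Y2 l1 l2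
    l12 hY1 hY2 hY12 γ γ' hγ0 hγ1 hγ2 hγ3 hγ5 hγ4 hγ6 hγ7 hγ'0 hγ'1 hγ'2 hγ'3 hγ'5 hγ'4 hγ'6 hγ'7

end PaperA2
end
end

section
/- Let sigma : A (x) A -> k be a linear map with sigma(iota(h) (x) iota(h')) = eps(h)*eps(h') for all h, h' in H, and let alpha : A -> k be convolution invertible such that (alpha -> sigma)(iota(h) (x) iota(h')) = eps(h)*eps(h') for all h, h' in H. Then alpha o iota : H -> k is an algebra homomorphism: alpha(1) = 1 and alpha(iota(h)*iota(h')) = alpha(iota(h))*alpha(iota(h')) for all h, h' in H. -/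
/-!
Common framework: convolution algebras, Hopf 2-cocycles, the Nichols algebra `B` of Cartan
type `A₂` with `q = -1`, its bosonization `A = B # H`, bilinear forms on `B` and their
extensions to `A ⊗ A`, following García–Sánchez, "Hopf cocycles associated to pointed and
copointed deformations over S₃" (arXiv:2108.11432).
-/

open scoped TensorProduct
open TensorProduct

noncomputable section

namespace PaperA2

section Convolution

open LinearMap WithConv

variable {k : Type*} [Field k] {C D : Type*} [AddCommMonoid C] [Module k C]
  [AddCommMonoid D] [Module k D]

lemma conv_eq_ofConv_mul [CoalgebraStruct k C] (f g : C →ₗ[k] k) :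
    conv k f g = (toConv f * toConv g).ofConv := rfl

lemma convOne_eq_ofConv_one [Coalgebra k C] :
    convOne k = (1 : WithConv (C →ₗ[k] k)).ofConv := by
  ext; simp [convOne]

lemma conv_comp_coalgHom [Coalgebra k C] [Coalgebra k D] (f g : D →ₗ[k] k)
    (φ : C →ₗc[k] D) :
    conv k f g ∘ₗ φ.toLinearMap = conv k (f ∘ₗ φ.toLinearMap) (g ∘ₗ φ.toLinearMap) :=
  convMul_comp_coalgHom_distrib (toConv f) (toConv g) φ

lemma convOne_comp_coalgHom [CoalgebraStruct k C] [CoalgebraStruct k D] (φ : C →ₗc[k] D) :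
    convOne k ∘ₗ φ.toLinearMap = convOne k :=
  φ.counit_comp

lemma conv_convOne [Coalgebra k C] (f : C →ₗ[k] k) : conv k f (convOne k) = f := by
  rw [convOne_eq_ofConv_one, conv_eq_ofConv_mul, toConv_ofConv, mul_one, ofConv_toConv]

lemma conv_left_inv_eq_right_inv [Coalgebra k C] {f g h : C →ₗ[k] k}
    (hfg : conv k f g = convOne k) (hgh : conv k g h = convOne k) : f = h := by
  rw [conv_eq_ofConv_mul, convOne_eq_ofConv_one] at hfg hgh
  exact toConv_injective (left_inv_eq_right_inv (ofConv_injective hfg) (ofConv_injective hgh))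

lemma comp_map_eq_convOne [Coalgebra k C] [Coalgebra k D] (ι : C →ₗc[k] D)
    (f : D ⊗[k] D →ₗ[k] k)
    (hf : ∀ c c' : C, f (ι c ⊗ₜ[k] ι c')
      = Coalgebra.counit (R := k) c * Coalgebra.counit (R := k) c') :
    f ∘ₗ (Coalgebra.TensorProduct.map ι ι).toLinearMap = convOne k := by
  ext c c'
  simp [hf, convOne, mul_comm]

end Convolution

section Bialgebra

open LinearMap WithConv

variable {k : Type*} [Field k] {A : Type*} [Ring A] [Bialgebra k A]

lemma conv_apply_one (f g : A →ₗ[k] k) : conv k f g 1 = f 1 * g 1 := by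
  simp [conv, Algebra.TensorProduct.one_def]

/-- Pulled back along the coalgebra maps `φ` and `m ∘ φ`, the hypotheses say that
`(α ⊗ α) φ * α⁻¹ m φ = ε` and `α⁻¹ m φ * α m φ = ε` in the convolution ring of `C`,
so `(α ⊗ α) φ` and `α m φ` are a left and a right inverse of the same element. -/
lemma mul'_map_comp_eq_comp_mul'_comp {C : Type*} [AddCommMonoid C] [Module k C] [Coalgebra k C]
    (φ : C →ₗc[k] A ⊗[k] A) (σ : A ⊗[k] A →ₗ[k] k) (α αinv : A →ₗ[k] k)
    (hinv : conv k αinv α = convOne k) (hσ : σ ∘ₗ φ.toLinearMap = convOne k)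
    (hact : act k α αinv σ ∘ₗ φ.toLinearMap = convOne k) :
    mul' k k ∘ₗ map α α ∘ₗ φ.toLinearMap = α ∘ₗ mul' k A ∘ₗ φ.toLinearMap := by
  set μ := (Bialgebra.mulCoalgHom k A).comp φ
  have hinvμ : conv k (αinv ∘ₗ μ.toLinearMap) (α ∘ₗ μ.toLinearMap) = convOne k := by
    rw [← conv_comp_coalgHom, hinv, convOne_comp_coalgHom]
  rw [act, conv_comp_coalgHom, conv_comp_coalgHom, hσ, conv_convOne] at hact
  exact conv_left_inv_eq_right_inv hact hinvμ

end Bialgebra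

theorem statement_15_general {k : Type*} [Field k] {H : Type*} [Ring H] [Bialgebra k H]
    {A : Type*} [Ring A] [HopfAlgebra k A] (ι : H →ₐc[k] A)
    (σ : A ⊗[k] A →ₗ[k] k)
    (hσ : ∀ h h' : H, σ (ι h ⊗ₜ[k] ι h')
      = Coalgebra.counit (R := k) h * Coalgebra.counit (R := k) h')
    (α αinv : A →ₗ[k] k)
    (hinv2 : conv k αinv α = convOne k)
    (hact : ∀ h h' : H, act k α αinv σ (ι h ⊗ₜ[k] ι h')
      = Coalgebra.counit (R := k) h * Coalgebra.counit (R := k) h') :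
    α 1 = 1 ∧ ∀ h h' : H, α (ι h * ι h') = α (ι h) * α (ι h') := by
  have key := mul'_map_comp_eq_comp_mul'_comp
    (Coalgebra.TensorProduct.map ι.toCoalgHom ι.toCoalgHom) σ α αinv hinv2
    (comp_map_eq_convOne _ σ hσ) (comp_map_eq_convOne _ _ hact)
  have hmul (h h' : H) : α (ι h * ι h') = α (ι h) * α (ι h') :=
    (LinearMap.congr_fun key (h ⊗ₜ h')).symm
  have hunit : αinv 1 * α 1 = 1 := by
    simpa [conv_apply_one, convOne] using LinearMap.congr_fun hinv2 1
  have hidem : α 1 * α 1 = 1 * α 1 := by simpa using (hmul 1 1).symm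
  exact ⟨mul_right_cancel₀ (right_ne_zero_of_mul_eq_one hunit) hidem, hmul⟩

/-- If `σ : A ⊗ A → k` restricts trivially to `H ⊗ H` (through the
bialgebra map `ι : H → A`) and `α ⇀ σ` does as well, then `α ∘ ι` is an algebra map. -/
theorem statement_15 {k : Type*} [Field k] {H : Type*} [Ring H] [Bialgebra k H]
    {A : Type*} [Ring A] [HopfAlgebra k A] (ι : H →ₐc[k] A)
    (σ : A ⊗[k] A →ₗ[k] k)
    (hσ : ∀ h h' : H, σ (ι h ⊗ₜ[k] ι h')
      = Coalgebra.counit (R := k) h * Coalgebra.counit (R := k) h')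
    (α αinv : A →ₗ[k] k)
    (hinv1 : conv k α αinv = convOne k) (hinv2 : conv k αinv α = convOne k)
    (hact : ∀ h h' : H, act k α αinv σ (ι h ⊗ₜ[k] ι h')
      = Coalgebra.counit (R := k) h * Coalgebra.counit (R := k) h') :
    α 1 = 1 ∧ ∀ h h' : H, α (ι h * ι h') = α (ι h) * α (ι h') :=
  statement_15_general ι σ hσ α αinv hinv2 hact

end PaperA2
end
end
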